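/- arXiv:2204.02108 — 4 statements merged into one kernel-verified Lean document; each statement's English description precedes it below -/
import Mathlib

section
/- Covering lemma: Let σ be a finite relational signature. For every k, r ≥ 0, every σ-structure A, and every tuple a⃗ of at most k elements of A, there exist a tuple b⃗ of at most k elements of A and a radius R with r ≤ R ≤ 4^k·r such that the r-neighborhood of a⃗ is contained (as a set of elements) in the R-neighborhood of b⃗, and for all distinct components b, b' of b⃗ the 3R-neighborhoods N_A(b,3R) and N_A(b',3R) are disjoint. -/
open FirstOrder FirstOrder.Language

universe u v w

namespace Gaifman

/-- Two elements are adjacent in the Gaifman graph of a structure: they are distinct and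
occur together in some tuple belonging to some relation. -/
def Adj (L : FirstOrder.Language.{u, u}) (M : Type u) [L.Structure M] (a b : M) : Prop :=
  a ≠ b ∧ ∃ (n : ℕ) (R : L.Relations n) (t : Fin n → M),
    Structure.RelMap R t ∧ a ∈ Set.range t ∧ b ∈ Set.range t

/-- `CloseLE L M r a b` holds iff the Gaifman distance from `a` to `b` is at most `r`. -/
def CloseLE (L : FirstOrder.Language.{u, u}) (M : Type u) [L.Structure M] :
    ℕ → M → M → Prop
  | 0, a, b => a = b
  | r + 1, a, b => CloseLE L M r a b ∨ ∃ c, CloseLE L M r a c ∧ Adj L M c b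

lemma closeLE_self (L : FirstOrder.Language.{u, u}) (M : Type u) [L.Structure M] :
    ∀ (r : ℕ) (a : M), CloseLE L M r a a
  | 0, _ => rfl
  | r + 1, a => Or.inl (closeLE_self L M r a)

/-- The `r`-neighborhood of a tuple: all elements at Gaifman distance at most `r`
from some component of the tuple. -/
def Ball (L : FirstOrder.Language.{u, u}) {M : Type u} [L.Structure M] {m : ℕ}
    (a : Fin m → M) (r : ℕ) : Set M :=
  {x | ∃ i, CloseLE L M r (a i) x}

lemma self_mem_ball (L : FirstOrder.Language.{u, u}) {M : Type u} [L.Structure M] {m : ℕ}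
    (a : Fin m → M) (r : ℕ) (i : Fin m) :
    a i ∈ Ball L a r := ⟨i, closeLE_self L M r (a i)⟩

/-- The substructure induced on a subset of a structure over a relational language. -/
def inducedStructure (L : FirstOrder.Language.{u, u}) [L.IsRelational] {M : Type u}
    [L.Structure M] (s : Set M) : L.Structure s where
  funMap {n} f _ := isEmptyElim f
  RelMap {n} R t := Structure.RelMap R fun i => (t i : M)

/-- A formula is `r`-local if its truth at a tuple only depends on the induced substructure on
the `r`-neighborhood of the tuple. -/
def IsLocal {L : FirstOrder.Language.{u, u}} [L.IsRelational] (r : ℕ) {m : ℕ}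
    (φ : L.Formula (Fin m)) : Prop :=
  ∀ (M : Type u) [L.Structure M] (a : Fin m → M),
    φ.Realize a ↔
      (letI := inducedStructure L (Ball L a r)
       φ.Realize fun i => (⟨a i, self_mem_ball L a r i⟩ : Ball L a r))

/-- Quantifier rank of a (bounded) formula. -/
def qr {L : FirstOrder.Language.{u, u}} {α : Type v} : ∀ {n : ℕ}, L.BoundedFormula α n → ℕ
  | _, .falsum => 0
  | _, .equal _ _ => 0
  | _, .rel _ _ => 0
  | _, .imp f g => max (qr f) (qr g)
  | _, .all f => qr f + 1

/-- The components of a tuple are at pairwise Gaifman distance greater than `s`. -/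
def Far (L : FirstOrder.Language.{u, u}) (M : Type u) [L.Structure M] (s : ℕ) {m : ℕ}
    (a : Fin m → M) : Prop :=
  ∀ i j : Fin m, i ≠ j → ¬ CloseLE L M s (a i) (a j)

/-- `A ≼_{r,q,k} B` : every sentence `∃ x₁ … x_k, τ` with `τ` an `r`-local formula of
quantifier rank at most `q` that holds in `A` also holds in `B`. -/
def LocLE (L : FirstOrder.Language.{u, u}) [L.IsRelational] (r q k : ℕ) (M N : Type u)
    [L.Structure M] [L.Structure N] : Prop :=
  ∀ τ : L.Formula (Fin k), IsLocal r τ → qr τ ≤ q →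
    (∃ a : Fin k → M, τ.Realize a) → ∃ b : Fin k → N, τ.Realize b

/-- The preorder `≼_{r,q,k}` with radius and rank parameters in `ℕ ∪ {∞}`: the intersection
over all finite parameters below the given ones. -/
def LocLEE (L : FirstOrder.Language.{u, u}) [L.IsRelational] (r q : ℕ∞) (k : ℕ)
    (M N : Type u) [L.Structure M] [L.Structure N] : Prop :=
  ∀ r' q' : ℕ, (r' : ℕ∞) ≤ r → (q' : ℕ∞) ≤ q → LocLE L r' q' k M N

/-- Local elementary embedding. -/
def IsLocalElemEmb (L : FirstOrder.Language.{u, u}) [L.IsRelational] {M N : Type u}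
    [L.Structure M] [L.Structure N] (h : M → N) : Prop :=
  ∀ (k r : ℕ) (a : Fin k → M) (φ : L.Formula (Fin k)), IsLocal r φ →
    (φ.Realize a ↔ φ.Realize (h ∘ a))

/-- Disjoint union of two structures over a relational language. -/
def sumStructure (L : FirstOrder.Language.{u, u}) [L.IsRelational] (M N : Type u)
    [L.Structure M] [L.Structure N] : L.Structure (M ⊕ N) where
  funMap {n} f _ := isEmptyElim f
  RelMap {n} R t :=
    (∃ tm : Fin n → M, t = Sum.inl ∘ tm ∧ Structure.RelMap R tm) ∨
    (∃ tn : Fin n → N, t = Sum.inr ∘ tn ∧ Structure.RelMap R tn)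

/-- A bundled `L`-structure. -/
structure Struc (L : FirstOrder.Language.{u, u}) : Type (u + 1) where
  carrier : Type u
  str : L.Structure carrier

attribute [instance] Struc.str

/-- The `(q,r)`-local type of a tuple. -/
def localType (L : FirstOrder.Language.{u, u}) [L.IsRelational] (r q : ℕ) {M : Type u}
    [L.Structure M] {m : ℕ} (a : Fin m → M) : Set (L.Formula (Fin m)) :=
  {τ | IsLocal r τ ∧ qr τ ≤ q ∧ τ.Realize a}

/-- The collection of `(q,r)`-local types of tuples of at most `k` elements. -/
def Specter (L : FirstOrder.Language.{u, u}) [L.IsRelational] (r q k : ℕ) (M : Type u)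
    [L.Structure M] : Set (Σ m : ℕ, Set (L.Formula (Fin m))) :=
  {p | ∃ m, m ≤ k ∧ ∃ a : Fin m → M, p = ⟨m, localType L r q a⟩}

/-- The data of a basic local sentence
`∃ x₁ … x_k, (⋀_{i ≠ j} d(xᵢ,xⱼ) > 2r ∧ ⋀ᵢ ψ(xᵢ))`. -/
structure BasicLocal (L : FirstOrder.Language.{u, u}) [L.IsRelational] where
  k : ℕ
  r : ℕ
  ψ : L.Formula (Fin 1)
  isLocal : IsLocal r ψ

/-- Truth of a basic local sentence in a structure. -/
def BasicLocal.Holds {L : FirstOrder.Language.{u, u}} [L.IsRelational] (b : BasicLocal L)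
    (M : Type u) [L.Structure M] : Prop :=
  ∃ a : Fin b.k → M, Far L M (2 * b.r) a ∧ ∀ i, b.ψ.Realize fun _ => a i

/-- The data of an asymmetric basic local sentence
`∃ x₁ … x_k, (⋀_{i ≠ j} d(xᵢ,xⱼ) > 2r ∧ ⋀ᵢ ψᵢ(xᵢ))`. -/
structure AsymBasicLocal (L : FirstOrder.Language.{u, u}) [L.IsRelational] where
  k : ℕ
  r : ℕ
  ψ : Fin k → L.Formula (Fin 1)
  isLocal : ∀ i, IsLocal r (ψ i)

/-- Truth of an asymmetric basic local sentence in a structure. -/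
def AsymBasicLocal.Holds {L : FirstOrder.Language.{u, u}} [L.IsRelational]
    (d : AsymBasicLocal L) (M : Type u) [L.Structure M] : Prop :=
  ∃ a : Fin d.k → M, Far L M (2 * d.r) a ∧ ∀ i, (d.ψ i).Realize fun _ => a i

/-- Positive Boolean combinations (conjunction and disjunction only). -/
inductive PosBool (α : Type w) : Type w
  | base : α → PosBool α
  | conj : PosBool α → PosBool α → PosBool α
  | disj : PosBool α → PosBool α → PosBool α

/-- Evaluation of a positive Boolean combination against a truth assignment. -/
def PosBool.Eval {α : Type w} (v : α → Prop) : PosBool α → Prop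
  | .base a => v a
  | .conj p q => p.Eval v ∧ q.Eval v
  | .disj p q => p.Eval v ∨ q.Eval v

/-- `φ` is equivalent over the class `C` to an existential local sentence `∃ x⃗, τ(x⃗)`. -/
def EquivToExistLocal {L : FirstOrder.Language.{u, u}} [L.IsRelational]
    (C : Set (Struc L)) (φ : L.Sentence) : Prop :=
  ∃ (k r : ℕ) (τ : L.Formula (Fin k)), IsLocal r τ ∧
    ∀ S ∈ C, (S.carrier ⊨ φ ↔ ∃ a : Fin k → S.carrier, τ.Realize a)

/-- `A ⊆ᵢ B` : `A` is isomorphic to an induced substructure of `B`. -/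
def SubInd {L : FirstOrder.Language.{u, u}} (A B : Struc L) : Prop :=
  Nonempty (A.carrier ↪[L] B.carrier)

/-- A hereditary class: closed under induced substructures. -/
def Hereditary {L : FirstOrder.Language.{u, u}} (C : Set (Struc L)) : Prop :=
  ∀ B ∈ C, ∀ A : Struc L, SubInd A B → A ∈ C

/-- `φ` is preserved under extensions over `C`. -/
def PreservedUnderExt {L : FirstOrder.Language.{u, u}} (C : Set (Struc L))
    (φ : L.Sentence) : Prop :=
  ∀ A ∈ C, ∀ B ∈ C, A.carrier ⊨ φ → SubInd A B → B.carrier ⊨ φ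

/-- `C` is closed under disjoint unions with finite structures. -/
def ClosedUnderDisjointUnions {L : FirstOrder.Language.{u, u}} [L.IsRelational]
    (C : Set (Struc L)) : Prop :=
  ∀ A ∈ C, ∀ B : Struc L, Finite B.carrier →
    (⟨A.carrier ⊕ B.carrier, sumStructure L A.carrier B.carrier⟩ : Struc L) ∈ C

/-- `Balls(C, r, k)` : the structures isomorphic to an `r`-neighborhood of a tuple of at most
`k` elements of a structure of `C`. -/
def BallsClass {L : FirstOrder.Language.{u, u}} [L.IsRelational] (C : Set (Struc L))
    (r k : ℕ) : Set (Struc L) :=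
  {T | ∃ A ∈ C, ∃ m, m ≤ k ∧ ∃ a : Fin m → A.carrier,
    letI := inducedStructure L (Ball L a r)
    Nonempty (T.carrier ≃[L] ↥(Ball L a r))}

/-- A `⊆ᵢ`-minimal model of `φ` in `C`: a model in `C` no proper induced substructure of
which satisfies `φ`. -/
def IsMinimalModel {L : FirstOrder.Language.{u, u}} [L.IsRelational] (C : Set (Struc L))
    (φ : L.Sentence) (A : Struc L) : Prop :=
  A ∈ C ∧ A.carrier ⊨ φ ∧
    ∀ s : Set A.carrier,
      (letI := inducedStructure L s
       (↥s) ⊨ φ) → s = Set.univ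

/-- Preservation under extensions holds over the class `D`: every sentence preserved under
extensions over `D` is equivalent over `D` to an existential sentence. -/
def PresExtHolds {L : FirstOrder.Language.{u, u}} [L.IsRelational]
    (D : Set (Struc L)) : Prop :=
  ∀ φ : L.Sentence, PreservedUnderExt D φ →
    ∃ (n : ℕ) (θ : L.Formula (Fin n)), θ.IsQF ∧
      ∀ S ∈ D, (S.carrier ⊨ φ ↔ ∃ a : Fin n → S.carrier, θ.Realize a)

end Gaifman

open Gaifman

/-!
Induction on the length of the tuple. If the `3r`-balls around two distinct components `a i`,
`a j` meet in a point `x`, then the `r`-balls around both lie in the `4r`-ball around `x`, so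
replacing `a i` by `x` and dropping `a j` yields a shorter tuple whose `4r`-neighborhood covers the
`r`-neighborhood of `a`. Each such merge multiplies the radius by `4` and can happen at most
`k` times.
-/

namespace Gaifman

variable {L : FirstOrder.Language.{u, u}} {M : Type u} [L.Structure M]

lemma adj_symm {a b : M} (h : Adj L M a b) : Adj L M b a := by
  obtain ⟨hne, n, R, t, hR, ha, hb⟩ := h
  exact ⟨hne.symm, n, R, t, hR, hb, ha⟩

lemma closeLE_mono {r s : ℕ} (hrs : r ≤ s) {a b : M} (h : CloseLE L M r a b) :
    CloseLE L M s a b := by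
  induction hrs with
  | refl => exact h
  | step _ ih => exact Or.inl ih

lemma closeLE_trans : ∀ {q p : ℕ} {a b c : M},
    CloseLE L M p a b → CloseLE L M q b c → CloseLE L M (p + q) a c
  | 0, _, _, _, _, hab, hbc => hbc ▸ hab
  | _ + 1, _, _, _, _, hab, Or.inl hbc => Or.inl (closeLE_trans hab hbc)
  | _ + 1, _, _, _, _, hab, Or.inr ⟨d, hbd, hdc⟩ => Or.inr ⟨d, closeLE_trans hab hbd, hdc⟩

lemma closeLE_symm : ∀ {r : ℕ} {a b : M}, CloseLE L M r a b → CloseLE L M r b a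
  | 0, _, _, h => h.symm
  | _ + 1, _, _, Or.inl h => Or.inl (closeLE_symm h)
  | r + 1, _, b, Or.inr ⟨c, hac, hcb⟩ => by
      have hbc : CloseLE L M 1 b c := Or.inr ⟨b, rfl, adj_symm hcb⟩
      simpa only [Nat.add_comm 1 r] using closeLE_trans hbc (closeLE_symm hac)

lemma mem_ball_singleton {b x : M} {s : ℕ} :
    x ∈ Ball L (fun _ : Fin 1 => b) s ↔ CloseLE L M s b x :=
  ⟨fun ⟨_, h⟩ => h, fun h => ⟨0, h⟩⟩

def BallsDisjoint (L : FirstOrder.Language.{u, u}) {M : Type u} [L.Structure M] (s : ℕ)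
    {m : ℕ} (b : Fin m → M) : Prop :=
  ∀ i j : Fin m, b i ≠ b j →
    Disjoint (Ball L (fun _ : Fin 1 => b i) s) (Ball L (fun _ : Fin 1 => b j) s)

lemma exists_closeLE_closeLE_of_not_ballsDisjoint {s m : ℕ} {a : Fin m → M}
    (h : ¬ BallsDisjoint L s a) :
    ∃ i j : Fin m, i ≠ j ∧ ∃ x, CloseLE L M s (a i) x ∧ CloseLE L M s (a j) x := by
  simp only [BallsDisjoint, not_forall] at h
  obtain ⟨i, j, hij, hmeet⟩ := h
  obtain ⟨x, hi, hj⟩ := Set.not_disjoint_iff.mp hmeet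
  exact ⟨i, j, fun e => hij (congrArg a e), x, mem_ball_singleton.mp hi,
    mem_ball_singleton.mp hj⟩

lemma ball_subset_ball_update_succAbove {m s r : ℕ} {a : Fin (m + 1) → M} {j : Fin (m + 1)}
    {i : Fin m} {x : M} (hi : CloseLE L M s (a (j.succAbove i)) x) (hj : CloseLE L M s (a j) x) :
    Ball L a r ⊆ Ball L (Function.update (a ∘ j.succAbove) i x) (s + r) := by
  rintro y ⟨l, hly⟩
  rcases Fin.eq_self_or_eq_succAbove j l with rfl | ⟨l', rfl⟩
  · exact ⟨i, by simpa only [Function.update_self] using closeLE_trans (closeLE_symm hj) hly⟩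
  · by_cases hl' : l' = i
    · subst hl'
      exact ⟨l', by simpa only [Function.update_self] using closeLE_trans (closeLE_symm hi) hly⟩
    · refine ⟨l', ?_⟩
      rw [Function.update_of_ne hl']
      exact closeLE_mono (Nat.le_add_left r s) hly

theorem exists_ballsDisjoint_cover (m r : ℕ) (a : Fin m → M) :
    ∃ m' : ℕ, m' ≤ m ∧ ∃ (b : Fin m' → M) (R : ℕ),
      r ≤ R ∧ R ≤ 4 ^ m * r ∧ Ball L a r ⊆ Ball L b R ∧ BallsDisjoint L (3 * R) b := by
  induction m generalizing r with
  | zero => exact ⟨0, le_rfl, a, r, le_rfl, by simp, subset_rfl, fun i => i.elim0⟩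
  | succ m ih =>
    by_cases hdisj : BallsDisjoint L (3 * r) a
    · exact ⟨m + 1, le_rfl, a, r, le_rfl, Nat.le_mul_of_pos_left r (by positivity), subset_rfl,
        hdisj⟩
    obtain ⟨i, j, hij, x, hi, hj⟩ := exists_closeLE_closeLE_of_not_ballsDisjoint hdisj
    obtain ⟨i', rfl⟩ := Fin.exists_succAbove_eq hij
    obtain ⟨m', hm', b, R, hrR, hR, hcover, hbdisj⟩ :=
      ih (4 * r) (Function.update (a ∘ j.succAbove) i' x)
    have hmerge : Ball L a r ⊆ Ball L (Function.update (a ∘ j.succAbove) i' x) (4 * r) := by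
      simpa only [show 3 * r + r = 4 * r by ring] using
        ball_subset_ball_update_succAbove (r := r) hi hj
    exact ⟨m', hm'.trans m.le_succ, b, R, by omega, hR.trans_eq (by ring),
      hmerge.trans hcover, hbdisj⟩

end Gaifman

theorem covering_lemma_general (L : FirstOrder.Language.{u, u}) (k r : ℕ) (A : Type u) [L.Structure A]
    {m : ℕ} (hm : m ≤ k) (a : Fin m → A) :
    ∃ m' : ℕ, m' ≤ k ∧ ∃ (b : Fin m' → A) (R : ℕ),
      r ≤ R ∧ R ≤ 4 ^ k * r ∧ Ball L a r ⊆ Ball L b R ∧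
      ∀ i j : Fin m', b i ≠ b j →
        Disjoint (Ball L (fun _ : Fin 1 => b i) (3 * R))
          (Ball L (fun _ : Fin 1 => b j) (3 * R)) := by
  obtain ⟨m', hm', b, R, hrR, hR, hcover, hdisj⟩ := exists_ballsDisjoint_cover (L := L) m r a
  have h4 : 4 ^ m * r ≤ 4 ^ k * r :=
    Nat.mul_le_mul_right r (Nat.pow_le_pow_right (by norm_num) hm)
  exact ⟨m', hm'.trans hm, b, R, hrR, hR.trans h4, hcover, hdisj⟩

/-- **Covering lemma.** For every `k, r ≥ 0`, every structure `A` and every tuple `a` of at most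
`k` elements of `A`, there are a tuple `b` of at most `k` elements and a radius `r ≤ R ≤ 4^k·r`
such that the `r`-neighborhood of `a` is contained in the `R`-neighborhood of `b` and the
`3R`-neighborhoods of distinct components of `b` are pairwise disjoint. -/
theorem covering_lemma (L : FirstOrder.Language.{u, u}) [L.IsRelational]
    [Finite (Σ n, L.Relations n)] (k r : ℕ) (A : Type u) [L.Structure A]
    {m : ℕ} (hm : m ≤ k) (a : Fin m → A) :
    ∃ m' : ℕ, m' ≤ k ∧ ∃ (b : Fin m' → A) (R : ℕ),
      r ≤ R ∧ R ≤ 4 ^ k * r ∧ Ball L a r ⊆ Ball L b R ∧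
      ∀ i j : Fin m', b i ≠ b j →
        Disjoint (Ball L (fun _ : Fin 1 => b i) (3 * R))
          (Ball L (fun _ : Fin 1 => b j) (3 * R)) :=
  covering_lemma_general L k r A hm a
end

section
/- Repetitions lemma: Let σ be a finite relational signature and let φ be the asymmetric basic local sentence ∃x₁…xₖ.(⋀_{i≠j} d(xᵢ,xⱼ)>2r ∧ ⋀_{j=1}^k ψⱼ(xⱼ)), where each ψⱼ is an r-local formula with one free variable; for 1 ≤ i ≤ k write φ/i for the analogous sentence with the variable xᵢ and the conjunct ψᵢ removed. If a σ-structure A satisfies φ/i and also contains k witnesses of ψᵢ at pairwise Gaifman distance greater than 4r (i.e., A ⊨ ∃x₁…xₖ.(⋀_{p≠q} d(x_p,x_q)>4r ∧ ⋀_p ψᵢ(x_p))), then A ⊨ φ. -/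
open FirstOrder FirstOrder.Language

universe u v w

open Gaifman

lemma closeLE_mono_succ (L : FirstOrder.Language.{u, u}) (M : Type u) [L.Structure M]
    (r : ℕ) (a b : M) (h : CloseLE L M r a b) : CloseLE L M (r + 1) a b := Or.inl h

lemma closeLE_trans (L : FirstOrder.Language.{u, u}) (M : Type u) [L.Structure M] :
    ∀ (s r : ℕ) (a b c : M), CloseLE L M r a b → CloseLE L M s b c →
      CloseLE L M (r + s) a c
  | 0, r, a, b, c, hab, hbc => by
      cases hbc; exact hab
  | s + 1, r, a, b, c, hab, hbc => by
      rcases hbc with h | ⟨d, hd, hadj⟩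
      · exact Or.inl (closeLE_trans L M s r a b c hab h)
      · exact Or.inr ⟨d, closeLE_trans L M s r a b d hab hd, hadj⟩

lemma adj_symm (L : FirstOrder.Language.{u, u}) (M : Type u) [L.Structure M]
    {a b : M} (h : Adj L M a b) : Adj L M b a := by
  obtain ⟨hne, n, R, t, ht, ha, hb⟩ := h
  exact ⟨hne.symm, n, R, t, ht, hb, ha⟩

lemma closeLE_symm (L : FirstOrder.Language.{u, u}) (M : Type u) [L.Structure M] :
    ∀ (r : ℕ) (a b : M), CloseLE L M r a b → CloseLE L M r b a
  | 0, a, b, h => by cases h; rfl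
  | r + 1, a, b, h => by
      rcases h with h | ⟨c, hc, hadj⟩
      · exact Or.inl (closeLE_symm L M r a b h)
      · have h1 : CloseLE L M 1 b c :=
          Or.inr ⟨b, rfl, adj_symm L M hadj⟩
        have := closeLE_trans L M r 1 b c a h1 (closeLE_symm L M r a c hc)
        rwa [Nat.add_comm] at this

/-- **Repetitions lemma.** Let `φ` be the asymmetric basic local sentence
`∃ x₁ … x_k, (⋀_{i≠j} d(xᵢ,xⱼ) > 2r ∧ ⋀_j ψⱼ(xⱼ))`. If a structure `A` satisfies `φ/i`
(the sentence with variable `xᵢ` and conjunct `ψᵢ` removed) and moreover contains `k`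
witnesses for `ψᵢ` at pairwise distance greater than `4r`, then `A ⊨ φ`. -/
theorem repetitions (L : FirstOrder.Language.{u, u}) [L.IsRelational]
    [Finite (Σ n, L.Relations n)] {k : ℕ} (r : ℕ) (ψ : Fin k → L.Formula (Fin 1))
    (hψ : ∀ j, IsLocal r (ψ j)) (i : Fin k) (A : Type u) [L.Structure A]
    (hdrop : ∃ a : {j : Fin k // j ≠ i} → A,
      (∀ p q : {j : Fin k // j ≠ i}, p ≠ q → ¬ CloseLE L A (2 * r) (a p) (a q)) ∧
      ∀ j : {j : Fin k // j ≠ i}, (ψ j).Realize fun _ => a j)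
    (hrep : ∃ b : Fin k → A, Far L A (4 * r) b ∧ ∀ p, (ψ i).Realize fun _ => b p) :
    ∃ a : Fin k → A, Far L A (2 * r) a ∧ ∀ j, (ψ j).Realize fun _ => a j := by
  obtain ⟨a, hafar, haψ⟩ := hdrop
  obtain ⟨b, hbfar, hbψ⟩ := hrep
  -- find p such that b p is far (> 2r) from all a j
  have hex : ∃ p : Fin k, ∀ j : {j : Fin k // j ≠ i}, ¬ CloseLE L A (2 * r) (a j) (b p) := by
    by_contra hcon
    push_neg at hcon
    choose g hg using hcon
    have hginj : Function.Injective g := by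
      intro p q hpq
      by_contra hne
      apply hbfar p q hne
      have h1 : CloseLE L A (2 * r) (b p) (a (g p)) :=
        closeLE_symm L A _ _ _ (hg p)
      have h2 : CloseLE L A (2 * r) (a (g q)) (b q) := hg q
      rw [hpq] at h1
      have := closeLE_trans L A (2 * r) (2 * r) (b p) (a (g q)) (b q) h1 h2
      have h4 : 2 * r + 2 * r = 4 * r := by ring
      rwa [h4] at this
    have hcard : Fintype.card (Fin k) ≤ Fintype.card {j : Fin k // j ≠ i} :=
      Fintype.card_le_of_injective g hginj
    have : Fintype.card {j : Fin k // j ≠ i} < Fintype.card (Fin k) := by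
      simpa using Fintype.card_subtype_lt (p := fun j => j ≠ i) (x := i) (by simp)
    omega
  obtain ⟨p, hp⟩ := hex
  refine ⟨fun j => if h : j = i then b p else a ⟨j, h⟩, ?_, ?_⟩
  · intro j₁ j₂ hne
    by_cases h1 : j₁ = i <;> by_cases h2 : j₂ = i <;> simp [h1, h2]
    · exact absurd (h1.trans h2.symm) hne
    · intro hc
      exact hp ⟨j₂, h2⟩ (closeLE_symm L A _ _ _ hc)
    · exact hp ⟨j₁, h1⟩
    · intro hc
      exact hafar ⟨j₁, h1⟩ ⟨j₂, h2⟩ (by simp [Subtype.ext_iff]; exact hne) hc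
  · intro j
    by_cases h : j = i
    · subst h; simpa using hbψ p
    · simpa [h] using haψ ⟨j, h⟩
end

section
/- Failure in the finite: There exist a finite relational signature σ and a first-order sentence φ over σ such that φ is preserved under disjoint unions over the class of all finite σ-structures (i.e., for all finite σ-structures A, B, if A ⊨ φ then A ⊎ B ⊨ φ), but φ is not equivalent over the class of all finite σ-structures to any existential local sentence. -/
open FirstOrder FirstOrder.Language

universe u v w

open Gaifman

/-!
Over one binary relation, `phi` says: some vertex has two in-neighbours, and if moreover some
vertex has two out-neighbours and no vertex is a sink, then two vertices have two in-neighbours.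
It is preserved under disjoint unions of finite structures, because a finite digraph without sinks
in which some vertex has two out-neighbours has more edges than vertices, hence a vertex with two
in-neighbours.

Suppose `phi` were equivalent on finite structures to `∃ x₁ … x_k, τ` with `τ` `r`-local. The
spider with `k + 1` legs of length `r + 1` running into a looped hub satisfies `phi`, as no vertex
has two out-neighbours; let `a` witness `τ` in it. Some leg avoids `a`, and a loop at its foot
creates a second vertex with two out-neighbours but no second vertex with two in-neighbours, so
`phi` fails. A loop does not change the Gaifman graph, and the foot is at distance more than `r`
from `a`, so the `r`-neighbourhood of `a` is unchanged and `τ` still holds at `a`.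
-/

namespace Gaifman

variable {L : FirstOrder.Language.{u, u}} {M : Type u}

theorem closeLE_iff_of_adj_iff {S₁ S₂ : L.Structure M}
    (h : ∀ x y, @Adj L M S₁ x y ↔ @Adj L M S₂ x y) :
    ∀ (s : ℕ) (x y : M), @CloseLE L M S₁ s x y ↔ @CloseLE L M S₂ s x y
  | 0, _, _ => Iff.rfl
  | s + 1, x, y => or_congr (closeLE_iff_of_adj_iff h s x y)
      (exists_congr fun c => and_congr (closeLE_iff_of_adj_iff h s x c) (h c y))

theorem IsLocal.realize_iff_of_agree_on_ball [L.IsRelational] {r m : ℕ}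
    {τ : L.Formula (Fin m)} (hτ : IsLocal r τ) {S₁ S₂ : L.Structure M} (a : Fin m → M)
    (hadj : ∀ x y, @Adj L M S₁ x y ↔ @Adj L M S₂ x y)
    (hrel : ∀ {n} (R : L.Relations n) (t : Fin n → M), (∀ i, t i ∈ @Ball L M S₁ m a r) →
      (@Structure.RelMap L M S₁ n R t ↔ @Structure.RelMap L M S₂ n R t)) :
    @Formula.Realize L M S₁ _ τ a ↔ @Formula.Realize L M S₂ _ τ a := by
  have hball : @Ball L M S₁ m a r = @Ball L M S₂ m a r :=
    Set.ext fun x => exists_congr fun i => closeLE_iff_of_adj_iff hadj r (a i) x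
  let _ := @inducedStructure L _ M S₁ (@Ball L M S₁ m a r)
  let _ := @inducedStructure L _ M S₂ (@Ball L M S₂ m a r)
  let g : @Ball L M S₁ m a r ≃[L] @Ball L M S₂ m a r :=
    { toEquiv := Equiv.setCongr hball
      map_fun' := fun f => isEmptyElim f
      map_rel' := fun R t => (hrel R (fun i => t i) fun i => (t i).2).symm }
  rw [@hτ M S₁ a, @hτ M S₂ a, ← StrongHomClass.realize_formula g]
  rfl

theorem CloseLE.le_add_of_adj {f : M → ℕ} [L.Structure M]
    (hf : ∀ x y, Adj L M x y → f x ≤ f y + 1) :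
    ∀ {s : ℕ} {x y : M}, CloseLE L M s x y → f x ≤ f y + s
  | 0, _, _, rfl => le_rfl
  | s + 1, _, _, .inl h => (CloseLE.le_add_of_adj hf h).trans (by omega)
  | s + 1, _, _, .inr ⟨_, hc, hcy⟩ => by
    have := CloseLE.le_add_of_adj hf hc
    have := hf _ _ hcy
    omega

end Gaifman

namespace Digraph

variable {V W : Type*} (G : Digraph V) (H : Digraph W)

def IsMerge (y : V) : Prop := ∃ a b, a ≠ b ∧ G.Adj a y ∧ G.Adj b y

def IsBranch (x : V) : Prop := ∃ c d, c ≠ d ∧ G.Adj x c ∧ G.Adj x d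

def HasNoSink : Prop := ∀ x, ∃ y, G.Adj x y

def MergeProperty : Prop :=
  (∃ y, G.IsMerge y) ∧
    ((∃ x, G.IsBranch x) → G.HasNoSink → ∃ y₁ y₂, y₁ ≠ y₂ ∧ G.IsMerge y₁ ∧ G.IsMerge y₂)

variable {G} in
theorem exists_isMerge_of_finite [Finite V] (hsink : G.HasNoSink) {x : V} (hx : G.IsBranch x) :
    ∃ y, G.IsMerge y := by
  by_contra! hmerge
  -- Without merges a choice of successors is injective, hence surjective as `V` is finite, so
  -- every out-neighbour of `x` is the chosen successor of `x`.
  have hin : ∀ {a b y}, G.Adj a y → G.Adj b y → a = b := fun ha hb =>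
    by_contra fun hab => hmerge _ ⟨_, _, hab, ha, hb⟩
  choose next hnext using hsink
  have hsurj : Function.Surjective next :=
    Finite.surjective_of_injective fun a b h => hin (hnext a) (h ▸ hnext b)
  have hout : ∀ {c}, G.Adj x c → c = next x := fun {c} hc => by
    obtain ⟨z, rfl⟩ := hsurj c
    rw [hin (hnext z) hc]
  obtain ⟨c, d, hcd, hc, hd⟩ := hx
  exact hcd ((hout hc).trans (hout hd).symm)

def sum : Digraph (V ⊕ W) where
  Adj := Sum.LiftRel G.Adj H.Adj

variable {G H}

theorem IsMerge.sum_inl {y : V} (h : G.IsMerge y) : (G.sum H).IsMerge (.inl y) :=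
  let ⟨a, b, hab, ha, hb⟩ := h
  ⟨.inl a, .inl b, Sum.inl_injective.ne hab, .inl ha, .inl hb⟩

theorem IsMerge.sum_inr {y : W} (h : H.IsMerge y) : (G.sum H).IsMerge (.inr y) :=
  let ⟨a, b, hab, ha, hb⟩ := h
  ⟨.inr a, .inr b, Sum.inr_injective.ne hab, .inr ha, .inr hb⟩

theorem sum_adj_inl {x : V} {z : V ⊕ W} :
    (G.sum H).Adj (.inl x) z ↔ ∃ y, z = .inl y ∧ G.Adj x y := by
  rcases z with y | y <;> simp [sum]

theorem sum_adj_inr {x : W} {z : V ⊕ W} :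
    (G.sum H).Adj (.inr x) z ↔ ∃ y, z = .inr y ∧ H.Adj x y := by
  rcases z with y | y <;> simp [sum]

theorem isBranch_sum_inl {x : V} : (G.sum H).IsBranch (.inl x) ↔ G.IsBranch x := by
  simp [IsBranch, sum_adj_inl]

theorem isBranch_sum_inr {x : W} : (G.sum H).IsBranch (.inr x) ↔ H.IsBranch x := by
  simp [IsBranch, sum_adj_inr]

theorem HasNoSink.sum_left (h : (G.sum H).HasNoSink) : G.HasNoSink := fun x => by
  obtain ⟨y, -, hy⟩ := sum_adj_inl.1 (h (.inl x)).choose_spec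
  exact ⟨y, hy⟩

theorem HasNoSink.sum_right (h : (G.sum H).HasNoSink) : H.HasNoSink := fun x => by
  obtain ⟨y, -, hy⟩ := sum_adj_inr.1 (h (.inr x)).choose_spec
  exact ⟨y, hy⟩

theorem MergeProperty.sum [Finite W] (hG : G.MergeProperty) : (G.sum H).MergeProperty := by
  obtain ⟨⟨y, hy⟩, himp⟩ := hG
  refine ⟨⟨_, hy.sum_inl⟩, ?_⟩
  rintro ⟨x | x, hx⟩ hsink
  · obtain ⟨y₁, y₂, hne, h₁, h₂⟩ := himp ⟨x, isBranch_sum_inl.1 hx⟩ hsink.sum_left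
    exact ⟨_, _, Sum.inl_injective.ne hne, h₁.sum_inl, h₂.sum_inl⟩
  · obtain ⟨y', hy'⟩ := exists_isMerge_of_finite hsink.sum_right (isBranch_sum_inr.1 hx)
    exact ⟨_, _, Sum.inl_ne_inr, hy.sum_inl, hy'.sum_inr⟩

def loopAt {V : Type*} (w : V) : Digraph V where
  Adj x y := x = w ∧ y = w

/-- `k + 1` legs `some (i, 0) → ⋯ → some (i, r)` running into the hub `none`, which carries a
loop. -/
def spider (k r : ℕ) : Digraph (Option (Fin (k + 1) × Fin (r + 1))) where
  Adj x y := match x, y with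
    | some (i, p), some (j, q) => j = i ∧ (q : ℕ) = p + 1
    | some (_, p), none => p = Fin.last r
    | none, none => True
    | none, some _ => False

variable {k r : ℕ}

theorem spider_hasNoSink : (spider k r).HasNoSink
  | none => ⟨none, trivial⟩
  | some (i, p) =>
    if h : p = Fin.last r then ⟨none, h⟩
    else ⟨some (i, ⟨p + 1, by have := Fin.val_lt_last h; omega⟩), rfl, rfl⟩

theorem spider_adj_unique_out {x c d} (hc : (spider k r).Adj x c) (hd : (spider k r).Adj x d) :
    c = d := by
  rcases x with _ | ⟨i, p⟩ <;> rcases c with _ | ⟨i', p'⟩ <;> rcases d with _ | ⟨i'', p''⟩ <;>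
    simp only [spider, Fin.ext_iff, Fin.val_last] at hc hd ⊢ <;> grind

theorem spider_adj_unique_in {a b y} (ha : (spider k r).Adj a y) (hb : (spider k r).Adj b y)
    (hy : y ≠ none) : a = b := by
  rcases y with _ | ⟨i, p⟩ <;> rcases a with _ | ⟨i', p'⟩ <;> rcases b with _ | ⟨i'', p''⟩ <;>
    simp only [spider, Fin.ext_iff, Fin.val_last] at ha hb ⊢ <;> grind

theorem spider_not_adj_foot (x) (i : Fin (k + 1)) : ¬ (spider k r).Adj x (some (i, 0)) := by
  rcases x with _ | ⟨i', p'⟩ <;> simp [spider]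

theorem spider_isMerge_hub : (spider k r).IsMerge none :=
  ⟨none, some (0, Fin.last r), by simp, trivial, rfl⟩

theorem spider_mergeProperty : (spider k r).MergeProperty :=
  ⟨⟨none, spider_isMerge_hub⟩, fun ⟨_, _, _, hcd, hc, hd⟩ _ =>
    (hcd (spider_adj_unique_out hc hd)).elim⟩

theorem spider_sup_loopAt_not_mergeProperty (i : Fin (k + 1)) :
    ¬ (spider k r ⊔ loopAt (some (i, 0))).MergeProperty := by
  rintro ⟨-, himp⟩
  have hbranch : (spider k r ⊔ loopAt (some (i, 0))).IsBranch (some (i, 0)) := by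
    obtain ⟨c, hc⟩ := spider_hasNoSink (some (i, 0))
    refine ⟨some (i, 0), c, ?_, .inr ⟨rfl, rfl⟩, .inl hc⟩
    rintro rfl
    exact spider_not_adj_foot _ _ hc
  have hsink : (spider k r ⊔ loopAt (some (i, 0))).HasNoSink := fun x =>
    (spider_hasNoSink x).imp fun _ => .inl
  have hmerge : ∀ y, (spider k r ⊔ loopAt (some (i, 0))).IsMerge y → y = none := by
    rintro y ⟨a, b, hab, ha | ⟨rfl, rfl⟩, hb | ⟨rfl, hy⟩⟩
    · by_contra hy
      exact hab (spider_adj_unique_in ha hb hy)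
    · exact (spider_not_adj_foot _ _ (hy ▸ ha)).elim
    · exact (spider_not_adj_foot _ _ hb).elim
    · exact (hab rfl).elim
  obtain ⟨y₁, y₂, hne, h₁, h₂⟩ := himp ⟨_, hbranch⟩ hsink
  exact hne ((hmerge _ h₁).trans (hmerge _ h₂).symm)

theorem spider_exists_leg_avoiding {m : ℕ} (a : Fin m → Option (Fin (m + 1) × Fin (r + 1))) :
    ∃ i, ∀ j p, a j ≠ some (i, p) := by
  let leg : Fin m → Fin (m + 1) := fun j => ((a j).map Prod.fst).getD 0
  have : ¬ Function.Surjective leg := fun h => by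
    simpa using Fintype.card_le_of_surjective leg h
  obtain ⟨i, hi⟩ := not_forall.1 this
  exact ⟨i, fun j p h => hi ⟨j, by simp [leg, h]⟩⟩

end Digraph

namespace FirstOrder.Language.graph

open Digraph

variable {V : Type}

def _root_.Digraph.structure (G : Digraph V) : Language.graph.Structure V where
  RelMap | .adj => fun t => G.Adj (t 0) (t 1)

def toDigraph (V : Type) [Language.graph.Structure V] : Digraph V where
  Adj x y := Structure.RelMap adj ![x, y]

theorem toDigraph_sum (A B : Type) [Language.graph.Structure A] [Language.graph.Structure B] :
    @toDigraph (A ⊕ B) (Gaifman.sumStructure Language.graph A B) =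
      (toDigraph A).sum (toDigraph B) := by
  ext x y
  change (∃ tm : Fin 2 → A, ![x, y] = Sum.inl ∘ tm ∧ _) ∨
      (∃ tn : Fin 2 → B, ![x, y] = Sum.inr ∘ tn ∧ _) ↔ Sum.LiftRel _ _ x y
  rcases x with a | b <;> rcases y with a' | b' <;>
    simp [toDigraph, funext_iff, Fin.forall_fin_two, Fin.exists_fin_succ_pi] <;> rfl

def edge {n : ℕ} (i j : Fin n) : Language.graph.BoundedFormula Empty n :=
  adj.boundedFormula₂ (&i) (&j)

def distinct {n : ℕ} (i j : Fin n) : Language.graph.BoundedFormula Empty n :=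
  ∼((&i).bdEqual (&j))

def mergeSentence : Language.graph.Sentence :=
  BoundedFormula.exs (distinct (1 : Fin 3) 2 ⊓ edge 1 0 ⊓ edge 2 0)

def branchSentence : Language.graph.Sentence :=
  BoundedFormula.exs (distinct (1 : Fin 3) 2 ⊓ edge 0 1 ⊓ edge 0 2)

def noSinkSentence : Language.graph.Sentence :=
  ∀' ∃' edge (0 : Fin 2) 1

def twoMergesSentence : Language.graph.Sentence :=
  BoundedFormula.exs (distinct (0 : Fin 6) 1 ⊓ (distinct 2 3 ⊓ edge 2 0 ⊓ edge 3 0) ⊓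
    (distinct 4 5 ⊓ edge 4 1 ⊓ edge 5 1))

def phi : Language.graph.Sentence :=
  mergeSentence ⊓ (branchSentence ⊓ noSinkSentence ⟹ twoMergesSentence)

section Realize

variable [Language.graph.Structure V]

theorem realize_mergeSentence : V ⊨ mergeSentence ↔ ∃ y, (toDigraph V).IsMerge y := by
  simp only [mergeSentence, Sentence.Realize, edge, distinct, BoundedFormula.realize_exs,
    BoundedFormula.realize_inf, BoundedFormula.realize_not, BoundedFormula.realize_bdEqual,
    BoundedFormula.realize_rel₂, Function.comp_apply, Term.realize_var, Sum.elim_inr]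
  constructor
  · rintro ⟨xs, ⟨h12, h1⟩, h2⟩
    exact ⟨xs 0, xs 1, xs 2, h12, h1, h2⟩
  · rintro ⟨y, a, b, hab, ha, hb⟩
    exact ⟨![y, a, b], ⟨hab, ha⟩, hb⟩

theorem realize_branchSentence : V ⊨ branchSentence ↔ ∃ x, (toDigraph V).IsBranch x := by
  simp only [branchSentence, Sentence.Realize, edge, distinct, BoundedFormula.realize_exs,
    BoundedFormula.realize_inf, BoundedFormula.realize_not, BoundedFormula.realize_bdEqual,
    BoundedFormula.realize_rel₂, Function.comp_apply, Term.realize_var, Sum.elim_inr]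
  constructor
  · rintro ⟨xs, ⟨h12, h1⟩, h2⟩
    exact ⟨xs 0, xs 1, xs 2, h12, h1, h2⟩
  · rintro ⟨x, c, d, hcd, hc, hd⟩
    exact ⟨![x, c, d], ⟨hcd, hc⟩, hd⟩

theorem realize_noSinkSentence : V ⊨ noSinkSentence ↔ (toDigraph V).HasNoSink := by
  simp only [noSinkSentence, Sentence.Realize, Formula.Realize, edge, BoundedFormula.realize_all,
    BoundedFormula.realize_ex, BoundedFormula.realize_rel₂, Function.comp_apply, Term.realize_var,
    Sum.elim_inr]
  rfl

theorem realize_twoMergesSentence :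
    V ⊨ twoMergesSentence ↔
      ∃ y₁ y₂, y₁ ≠ y₂ ∧ (toDigraph V).IsMerge y₁ ∧ (toDigraph V).IsMerge y₂ := by
  simp only [twoMergesSentence, Sentence.Realize, edge, distinct, BoundedFormula.realize_exs,
    BoundedFormula.realize_inf, BoundedFormula.realize_not, BoundedFormula.realize_bdEqual,
    BoundedFormula.realize_rel₂, Function.comp_apply, Term.realize_var, Sum.elim_inr]
  constructor
  · rintro ⟨xs, ⟨h01, ⟨h23, h2⟩, h3⟩, ⟨h45, h4⟩, h5⟩
    exact ⟨xs 0, xs 1, h01, ⟨xs 2, xs 3, h23, h2, h3⟩, ⟨xs 4, xs 5, h45, h4, h5⟩⟩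
  · rintro ⟨y₁, y₂, hy, ⟨a, b, hab, ha, hb⟩, ⟨c, d, hcd, hc, hd⟩⟩
    exact ⟨![y₁, y₂, a, b, c, d], ⟨hy, ⟨hab, ha⟩, hb⟩, ⟨hcd, hc⟩, hd⟩

theorem realize_phi : V ⊨ phi ↔ (toDigraph V).MergeProperty := by
  simp only [phi, Sentence.Realize, Formula.realize_inf, Formula.realize_imp]
  rw [← Sentence.Realize, ← Sentence.Realize, ← Sentence.Realize, ← Sentence.Realize,
    realize_mergeSentence, realize_branchSentence, realize_noSinkSentence,
    realize_twoMergesSentence, Digraph.MergeProperty, and_imp]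

end Realize

theorem gaifmanAdj_structure_iff (G : Digraph V) {x y : V} :
    @Gaifman.Adj Language.graph V G.structure x y ↔ x ≠ y ∧ (G.Adj x y ∨ G.Adj y x) := by
  constructor
  · rintro ⟨hxy, n, ⟨⟩, t, ht, ⟨i, rfl⟩, ⟨j, rfl⟩⟩
    refine ⟨hxy, ?_⟩
    fin_cases i <;> fin_cases j
    exacts [absurd rfl hxy, .inl ht, .inr ht, absurd rfl hxy]
  · rintro ⟨hxy, h | h⟩
    · exact ⟨hxy, 2, adj, ![x, y], h, ⟨0, rfl⟩, ⟨1, rfl⟩⟩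
    · exact ⟨hxy, 2, adj, ![y, x], h, ⟨1, rfl⟩, ⟨0, rfl⟩⟩

theorem gaifmanAdj_sup_loopAt_iff (G : Digraph V) (w : V) {x y : V} :
    @Gaifman.Adj Language.graph V (G ⊔ loopAt w).structure x y ↔
      @Gaifman.Adj Language.graph V G.structure x y := by
  simp only [gaifmanAdj_structure_iff, sup_adj, loopAt]
  grind

theorem _root_.Gaifman.IsLocal.realize_sup_loopAt_iff {r m : ℕ}
    {τ : Language.graph.Formula (Fin m)} (hτ : IsLocal r τ) (G : Digraph V) {w : V}
    {a : Fin m → V} (hw : w ∉ @Ball _ V G.structure m a r) :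
    @Formula.Realize _ V G.structure _ τ a ↔
      @Formula.Realize _ V (G ⊔ loopAt w).structure _ τ a :=
  hτ.realize_iff_of_agree_on_ball a (fun _ _ => (gaifmanAdj_sup_loopAt_iff G w).symm)
    fun R t ht => by
      cases R
      exact (or_iff_left fun (h : t 0 = w ∧ t 1 = w) => hw (h.1 ▸ ht 0)).symm

theorem spider_foot_not_mem_ball {k r m : ℕ} {a : Fin m → Option (Fin (k + 1) × Fin (r + 1))}
    {i : Fin (k + 1)} (ha : ∀ j p, a j ≠ some (i, p)) :
    some (i, 0) ∉ @Ball _ _ (spider k r).structure m a r := by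
  rintro ⟨j, hj⟩
  let _ := (spider k r).structure
  -- changes by at most one along Gaifman edges: a lower bound for the distance from the foot
  let depth : Option (Fin (k + 1) × Fin (r + 1)) → ℕ := fun x =>
    x.elim (r + 1) fun ip => if ip.1 = i then ip.2 else r + 1
  have hdepth : ∀ x y, Gaifman.Adj Language.graph _ x y → depth x ≤ depth y + 1 := by
    intro x y hxy
    obtain ⟨-, h | h⟩ := (gaifmanAdj_structure_iff _).1 hxy <;>
      rcases x with _ | ⟨i', p'⟩ <;> rcases y with _ | ⟨i'', p''⟩ <;>
      simp only [spider] at h <;> simp only [depth, Option.elim] <;> grind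
  have hfar : depth (a j) = r + 1 := by
    rcases h : a j with _ | ⟨i', p'⟩
    · rfl
    · simp only [depth, Option.elim, ite_eq_right_iff]
      rintro rfl
      exact (ha j p' h).elim
  have hfoot : depth (some (i, 0)) = 0 := by simp [depth]
  have := CloseLE.le_add_of_adj hdepth hj
  omega

end FirstOrder.Language.graph

open Digraph FirstOrder.Language.graph

/-- **Failure in the finite.** There are a finite relational signature and a first-order
sentence `φ` preserved under disjoint unions over the class of all finite structures which is
not equivalent over the class of all finite structures to any existential local sentence. -/
theorem failure_in_the_finite :
    ∃ (L : FirstOrder.Language.{0, 0}) (rel : L.IsRelational),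
      Finite (Σ n, L.Relations n) ∧
      ∃ φ : L.Sentence,
        letI := rel
        (∀ (A B : Type) [L.Structure A] [L.Structure B], Finite A → Finite B →
            A ⊨ φ → (letI := sumStructure L A B; (A ⊕ B) ⊨ φ)) ∧
        ¬ ∃ (k r : ℕ) (τ : L.Formula (Fin k)), IsLocal r τ ∧
            ∀ (M : Type) [L.Structure M], Finite M →
              (M ⊨ φ ↔ ∃ a : Fin k → M, τ.Realize a) := by
  have : Subsingleton (Σ n, Language.graph.Relations n) := ⟨by rintro ⟨_, ⟨⟩⟩ ⟨_, ⟨⟩⟩; rfl⟩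
  refine ⟨Language.graph, inferInstance, inferInstance, phi, ?_, ?_⟩
  · intro A B _ _ _ _ hA
    let _ := sumStructure Language.graph A B
    rw [realize_phi, toDigraph_sum]
    exact (realize_phi.1 hA).sum
  · rintro ⟨k, r, τ, hτ, hequiv⟩
    obtain ⟨a, ha⟩ := (@hequiv _ (spider k r).structure inferInstance).1
      ((@realize_phi _ (spider k r).structure).2 spider_mergeProperty)
    obtain ⟨i, hi⟩ := spider_exists_leg_avoiding a
    have := (@hequiv _ (spider k r ⊔ loopAt (some (i, 0))).structure inferInstance).2
      ⟨a, (hτ.realize_sup_loopAt_iff _ (spider_foot_not_mem_ball hi)).1 ha⟩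
    exact spider_sup_loopAt_not_mergeProperty i
      ((@realize_phi _ (spider k r ⊔ loopAt (some (i, 0))).structure).1 this)
end

section
/- Existential local preservation under extensions: Let σ be a finite relational signature and let C be a hereditary class of finite σ-structures such that for all r, k ≥ 0 preservation under extensions holds over Balls(C,r,k). Then every existential local sentence that is preserved under extensions over C is equivalent over C to an existential sentence. -/
open FirstOrder FirstOrder.Language

universe u v w

open Gaifman

/-!
Write `φ` for `∃ x⃗, τ`. Since `Balls(C, r, k) ⊆ C`, the sentence `φ` is preserved under
extensions over `Balls(C, r, k)`, hence equivalent there to some `∃ y⃗, θ` with `θ`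
quantifier-free. If `τ(a⃗)` holds in `S ∈ C`, the ball `N_S(a⃗, r)` satisfies `φ` by locality,
so it contains a witness `b⃗` of `θ`. Each `bⱼ` is joined to some `aᵢ` by a path of length at
most `r` whose edges come from relation tuples; `a⃗`, `b⃗` and these tuples induce a substructure
`A` of `S` whose size is bounded independently of `S` and which is the `r`-ball around `a⃗` in
itself. So `A ∈ Balls(C, r, k)` satisfies `θ(b⃗)`, hence `φ`. Every model of `φ` in `C` thus
contains a model in `C` of bounded size, and `φ` is equivalent over `C` to the disjunction of the
diagrams of these finitely many small models, the converse being preservation under extensions.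
-/

namespace Gaifman

open Function

variable {L : FirstOrder.Language.{u, u}}

section Diagrams

lemma isQF_foldr {α : Type v} {n : ℕ} {op : L.BoundedFormula α n → L.BoundedFormula α n →
    L.BoundedFormula α n} (hop : ∀ φ ψ, φ.IsQF → ψ.IsQF → (op φ ψ).IsQF)
    {e : L.BoundedFormula α n} (he : e.IsQF) :
    ∀ l : List (L.BoundedFormula α n), (∀ φ ∈ l, φ.IsQF) → (l.foldr op e).IsQF
  | [], _ => he
  | φ :: l, hl => hop _ _ (hl φ List.mem_cons_self)
      (isQF_foldr hop he l fun ψ hψ => hl ψ (.tail _ hψ))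

lemma isQF_iInf {α : Type v} {β : Type w} [Finite β] {n : ℕ} {f : β → L.BoundedFormula α n}
    (hf : ∀ b, (f b).IsQF) : (BoundedFormula.iInf f).IsQF :=
  isQF_foldr (fun _ _ => .inf) .top _ fun _ hφ => by
    obtain ⟨b, -, rfl⟩ := List.mem_map.1 hφ
    exact hf b

lemma isQF_iSup {α : Type v} {β : Type w} [Finite β] {n : ℕ} {f : β → L.BoundedFormula α n}
    (hf : ∀ b, (f b).IsQF) : (BoundedFormula.iSup f).IsQF :=
  isQF_foldr (fun _ _ => .sup) BoundedFormula.isQF_bot _ fun _ hφ => by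
    obtain ⟨b, -, rfl⟩ := List.mem_map.1 hφ
    exact hf b

lemma realize_embedding_comp_of_isQF {α : Type v} {M N : Type u} [L.Structure M]
    [L.Structure N] {φ : L.Formula α} (hφ : φ.IsQF) (f : M ↪[L] N) (v : α → M) :
    φ.Realize (f ∘ v) ↔ φ.Realize v := by
  have := hφ.realize_embedding f (v := v) (xs := (default : Fin 0 → M))
  rwa [Subsingleton.elim (f ∘ default) default] at this

variable (L) in
abbrev Atom (n : ℕ) : Type u :=
  (Fin n × Fin n) ⊕ Σ R : (Σ l, L.Relations l), Fin R.1 → Fin n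

def Atom.formula {n : ℕ} : Atom L n → L.Formula (Fin n)
  | .inl (i, j) => Term.equal (.var i) (.var j)
  | .inr ⟨⟨_, R⟩, s⟩ => R.formula fun m => .var (s m)

lemma Atom.isQF_formula {n : ℕ} : ∀ α : Atom L n, α.formula.IsQF
  | .inl _ => (BoundedFormula.IsAtomic.equal _ _).isQF
  | .inr _ => (BoundedFormula.IsAtomic.rel _ _).isQF

variable (L) in
def atomicType {M : Type u} [L.Structure M] {n : ℕ} (b : Fin n → M) : Set (Atom L n) :=
  {α | α.formula.Realize b}

@[simp] lemma mem_atomicType_inl {M : Type u} [L.Structure M] {n : ℕ} (b : Fin n → M)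
    (i j : Fin n) : (.inl (i, j) : Atom L n) ∈ atomicType L b ↔ b i = b j := by
  simp [atomicType, Atom.formula]

@[simp] lemma mem_atomicType_inr {M : Type u} [L.Structure M] {n l : ℕ} (b : Fin n → M)
    (R : L.Relations l) (s : Fin l → Fin n) :
    (.inr ⟨⟨l, R⟩, s⟩ : Atom L n) ∈ atomicType L b ↔ Structure.RelMap R (b ∘ s) := by
  simp [atomicType, Atom.formula, Function.comp_def]

lemma atomicType_embedding_comp {M N : Type u} [L.Structure M] [L.Structure N] {n : ℕ}
    (f : M ↪[L] N) (b : Fin n → M) : atomicType L (f ∘ b) = atomicType L b :=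
  Set.ext fun α => realize_embedding_comp_of_isQF α.isQF_formula f b

lemma nonempty_embedding_of_atomicType_eq [L.IsRelational] {A M : Type u} [L.Structure A]
    [L.Structure M] {n : ℕ} {c : Fin n → A} (hc : Surjective c) {b : Fin n → M}
    (h : atomicType L b = atomicType L c) : Nonempty (A ↪[L] M) := by
  have hcs : c ∘ surjInv hc = id := funext (surjInv_eq hc)
  refine ⟨{ toFun := b ∘ surjInv hc, inj' := fun x y hxy => ?_,
            map_fun' := fun f => isEmptyElim f, map_rel' := fun R t => ?_ }⟩
  · have := (mem_atomicType_inl (L := L) b _ _).2 hxy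
    rw [h, mem_atomicType_inl] at this
    simpa only [surjInv_eq hc] using this
  · have := mem_atomicType_inr (L := L) b R (surjInv hc ∘ t)
    rw [h, mem_atomicType_inr, ← Function.comp_assoc, hcs, Function.id_comp] at this
    exact this.symm

variable [Finite (Σ l, L.Relations l)]

open Classical in
noncomputable def diagram {n : ℕ} (D : Set (Atom L n)) : L.Formula (Fin n) :=
  Formula.iInf fun α : Atom L n => if α ∈ D then α.formula else α.formula.not

lemma isQF_diagram {n : ℕ} (D : Set (Atom L n)) : (diagram D).IsQF := by
  classical
  refine isQF_iInf fun α => ?_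
  split_ifs
  exacts [α.isQF_formula, α.isQF_formula.not]

lemma realize_diagram {M : Type u} [L.Structure M] {n : ℕ} (D : Set (Atom L n))
    (b : Fin n → M) : (diagram D).Realize b ↔ atomicType L b = D := by
  classical
  simp only [diagram, Formula.realize_iInf, Set.ext_iff]
  refine forall_congr' fun α => ?_
  split_ifs with hα <;> simp [atomicType, hα]

theorem exists_isQF_iff_of_small_models [L.IsRelational] {ι : Type v} [Finite ι]
    {C : Set (Struc L)} {P : Struc L → Prop}
    (hpres : ∀ A ∈ C, ∀ B ∈ C, P A → SubInd A B → P B)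
    (hsmall : ∀ S ∈ C, P S →
      ∃ A ∈ C, P A ∧ SubInd A S ∧ ∃ c : ι → A.carrier, Surjective c) :
    ∃ (n : ℕ) (θ : L.Formula (Fin n)), θ.IsQF ∧
      ∀ S ∈ C, (P S ↔ ∃ b : Fin n → S.carrier, θ.Realize b) := by
  obtain ⟨n, ⟨e⟩⟩ := Finite.exists_equiv_fin ι
  let G : Set (Set (Atom L n)) :=
    {D | ∃ A ∈ C, P A ∧ ∃ c : Fin n → A.carrier, Surjective c ∧ atomicType L c = D}
  refine ⟨n, Formula.iSup fun D : G => diagram D.1, isQF_iSup fun D => isQF_diagram D.1,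
    fun S hS => ?_⟩
  simp only [Formula.realize_iSup, realize_diagram]
  constructor
  · intro hPS
    obtain ⟨A, hA, hPA, ⟨f⟩, c, hc⟩ := hsmall S hS hPS
    exact ⟨f ∘ c ∘ e.symm, ⟨_, A, hA, hPA, c ∘ e.symm, hc.comp e.symm.surjective, rfl⟩,
      atomicType_embedding_comp f _⟩
  · rintro ⟨b, ⟨_, A, hA, hPA, c, hc, rfl⟩, hbc⟩
    exact hpres A hA S hS hPA (nonempty_embedding_of_atomicType_eq hc hbc)

end Diagrams

section Locality

variable (L) in
noncomputable def maxArity : ℕ := ⨆ R : Σ l, L.Relations l, R.1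

lemma arity_le_maxArity [Finite (Σ l, L.Relations l)] {l : ℕ} (R : L.Relations l) :
    l ≤ maxArity L :=
  le_ciSup (f := fun R : Σ l, L.Relations l => R.1) (Set.finite_range _).bddAbove ⟨l, R⟩

lemma _root_.Finset.exists_fin_range_eq_of_card_le {α : Type v} {s : Finset α}
    (hs : s.Nonempty) {K : ℕ} (hK : s.card ≤ K) : ∃ w : Fin K → α, Set.range w = s := by
  obtain ⟨f, hf⟩ := (exists_surjective_iff (α := Fin K) (β := s)).2
    ⟨⟨fun _ => ⟨_, hs.choose_spec⟩⟩, Embedding.nonempty_of_card_le (by simpa using hK)⟩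
  refine ⟨Subtype.val ∘ f, ?_⟩
  rw [Set.range_comp, hf.range_eq, Set.image_univ, Subtype.range_coe]

lemma CloseLE.succ_of_relMap {M : Type u} [L.Structure M] {r l : ℕ} {x c w : M}
    (hxc : CloseLE L M r x c) {R : L.Relations l} {t : Fin l → M} (hR : Structure.RelMap R t)
    (hc : c ∈ Set.range t) (hw : w ∈ Set.range t) : CloseLE L M (r + 1) x w := by
  by_cases hcw : c = w
  · exact Or.inl (hcw ▸ hxc)
  · exact Or.inr ⟨c, hxc, hcw, l, R, t, hR, hc, hw⟩

variable [L.IsRelational]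

def inducedEmbedding {M : Type u} [L.Structure M] (s : Set M) :
    letI := inducedStructure L s
    s ↪[L] M :=
  letI := inducedStructure L s
  { toFun := Subtype.val
    inj' := Subtype.val_injective
    map_fun' := fun f => isEmptyElim f
    map_rel' := fun _ _ => Iff.rfl }

def inducedEquivOfForallMem {M : Type u} [L.Structure M] (s : Set M) (hs : ∀ x, x ∈ s) :
    letI := inducedStructure L s
    M ≃[L] s :=
  letI := inducedStructure L s
  { toFun := fun x => ⟨x, hs x⟩
    invFun := Subtype.val
    left_inv := fun _ => rfl
    right_inv := fun _ => rfl
    map_fun' := fun f => isEmptyElim f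
    map_rel' := fun _ _ => Iff.rfl }

variable [Finite (Σ l, L.Relations l)]

/-- `W` consists of `x` and one relation tuple per edge of a path from `x` to `y`. -/
theorem CloseLE.exists_finset {M : Type u} [L.Structure M] {r : ℕ} {x y : M}
    (h : CloseLE L M r x y) :
    ∃ W : Finset M, x ∈ W ∧ y ∈ W ∧ W.card ≤ 1 + r * maxArity L ∧
      ∀ Z : Set M, ↑W ⊆ Z → ∀ w ∈ W, ∀ (hx : x ∈ Z) (hw : w ∈ Z),
        letI := inducedStructure L Z
        CloseLE L Z r ⟨x, hx⟩ ⟨w, hw⟩ := by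
  classical
  induction r generalizing y with
  | zero =>
    refine ⟨{x}, Finset.mem_singleton_self x, Finset.mem_singleton.2 h.symm, by simp, ?_⟩
    intro Z _ w hw hx hw'
    exact Subtype.ext (Finset.mem_singleton.1 hw).symm
  | succ r ih =>
    rcases h with h | ⟨c, hxc, -, l, R, t, hR, hc, hy⟩
    · obtain ⟨W, hxW, hyW, hcard, hW⟩ := ih h
      exact ⟨W, hxW, hyW, hcard.trans (by nlinarith),
        fun Z hWZ w hw hx hw' => Or.inl (hW Z hWZ w hw hx hw')⟩
    · obtain ⟨W, hxW, hcW, hcard, hW⟩ := ih hxc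
      refine ⟨W ∪ Finset.univ.image t, Finset.mem_union_left _ hxW,
        Finset.mem_union_right _ (by simpa using hy), ?_, ?_⟩
      · calc (W ∪ Finset.univ.image t).card ≤ W.card + l :=
              (Finset.card_union_le _ _).trans
                (by gcongr; exact Finset.card_image_le.trans (by simp))
          _ ≤ 1 + (r + 1) * maxArity L := by have := arity_le_maxArity R; nlinarith
      · intro Z hWZ w hw hx hw'
        let := inducedStructure L Z
        have hWZ' : ↑W ⊆ Z := fun z hz => hWZ (by simp [Finset.mem_coe.1 hz])
        rcases Finset.mem_union.1 hw with hw | hw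
        · exact Or.inl (hW Z hWZ' w hw hx hw')
        · have ht : ∀ j, t j ∈ Z := fun j => hWZ (by simp)
          refine (hW Z hWZ' c hcW hx (hWZ' hcW)).succ_of_relMap
            (t := fun j => ⟨t j, ht j⟩) hR ?_ ?_
          · obtain ⟨j, rfl⟩ := hc
            exact ⟨j, rfl⟩
          · obtain ⟨j, -, rfl⟩ := Finset.mem_image.1 hw
            exact ⟨j, rfl⟩

theorem CloseLE.exists_tuple {M : Type u} [L.Structure M] {r : ℕ} {x y : M}
    (h : CloseLE L M r x y) :
    ∃ w : Fin (1 + r * maxArity L) → M, y ∈ Set.range w ∧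
      ∀ (Z : Set M) (hZ : Set.range w ⊆ Z) (i) (hx : x ∈ Z),
        letI := inducedStructure L Z
        CloseLE L Z r ⟨x, hx⟩ ⟨w i, hZ ⟨i, rfl⟩⟩ := by
  obtain ⟨W, hxW, hyW, hcard, hW⟩ := h.exists_finset
  obtain ⟨w, hw⟩ := Finset.exists_fin_range_eq_of_card_le ⟨x, hxW⟩ hcard
  refine ⟨w, hw ▸ hyW, fun Z hZ i hx => hW Z (hw ▸ hZ) (w i) ?_ hx _⟩
  simp [← Finset.mem_coe, ← hw]

end Locality

section Balls

noncomputable def exClosure {k : ℕ} (τ : L.Formula (Fin k)) : L.Sentence :=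
  (τ.relabel (Sum.inr : Fin k → Empty ⊕ Fin k)).iExs (Fin k)

lemma realize_exClosure {k : ℕ} (τ : L.Formula (Fin k)) (M : Type u) [L.Structure M] :
    M ⊨ exClosure τ ↔ ∃ a : Fin k → M, τ.Realize a := by
  rw [Sentence.Realize, exClosure, Formula.realize_iExs]
  exact exists_congr fun a => by rw [Formula.realize_relabel]; exact Iff.rfl

variable [L.IsRelational]

lemma ballsClass_subset {C : Set (Struc L)} (hher : Hereditary C) (r k : ℕ) :
    BallsClass C r k ⊆ C := by
  rintro T ⟨A, hA, m, -, a, ⟨g⟩⟩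
  let := inducedStructure L (Ball L a r)
  exact hher A hA T ⟨(inducedEmbedding (Ball L a r)).comp g.toEmbedding⟩

/-- `A` is induced on `a`, on paths from `a` to a witness of `θ` in the `r`-ball around `a`, and
on the relation tuples along them; it is the `r`-ball around `a` in itself. -/
theorem exists_small_ball_model [Finite (Σ l, L.Relations l)] {C : Set (Struc L)}
    (hher : Hereditary C) {k r n : ℕ} {τ : L.Formula (Fin k)} (hτ : IsLocal r τ)
    {θ : L.Formula (Fin n)} (hθ : θ.IsQF)
    (hτθ : ∀ T ∈ BallsClass C r k,
      ((∃ a : Fin k → T.carrier, τ.Realize a) ↔ ∃ b : Fin n → T.carrier, θ.Realize b))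
    {S : Struc L} (hS : S ∈ C) {a : Fin k → S.carrier} (ha : τ.Realize a) :
    ∃ A ∈ C, (∃ a' : Fin k → A.carrier, τ.Realize a') ∧ SubInd A S ∧
      ∃ c : Fin k ⊕ Fin n × Fin (1 + r * maxArity L) → A.carrier, Surjective c := by
  let := inducedStructure L (Ball L a r)
  obtain ⟨b, hb⟩ := (hτθ ⟨Ball L a r, inducedStructure L _⟩
    ⟨S, hS, k, le_rfl, a, ⟨.refl L _⟩⟩).1 ⟨_, (hτ S.carrier a).1 ha⟩
  choose idx hidx using fun j => (b j).2
  choose w hbw hw using fun j => (hidx j).exists_tuple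
  let u : Fin k ⊕ Fin n × Fin (1 + r * maxArity L) → S.carrier := Sum.elim a fun p => w p.1 p.2
  let Z := Set.range u
  let := inducedStructure L Z
  let A : Struc L := ⟨Z, inducedStructure L Z⟩
  have hAS : SubInd A S := ⟨inducedEmbedding Z⟩
  have hAC : A ∈ C := hher S hS A hAS
  have hwZ : ∀ j, Set.range (w j) ⊆ Z := by
    rintro j _ ⟨i, rfl⟩
    exact ⟨.inr (j, i), rfl⟩
  let a' : Fin k → Z := fun i => ⟨a i, .inl i, rfl⟩
  have hZball : ∀ z, z ∈ Ball L a' r := by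
    rintro ⟨_, i | ⟨j, i⟩, rfl⟩
    · exact ⟨i, closeLE_self _ _ _ _⟩
    · exact ⟨idx j, hw j Z (hwZ j) i _⟩
  have hA : A ∈ BallsClass C r k :=
    ⟨A, hAC, k, le_rfl, a', ⟨inducedEquivOfForallMem _ hZball⟩⟩
  have hb' : θ.Realize fun j => (⟨b j, hwZ j (hbw j)⟩ : Z) :=
    (realize_embedding_comp_of_isQF hθ (inducedEmbedding Z) _).1
      ((realize_embedding_comp_of_isQF hθ (inducedEmbedding _) b).2 hb)
  exact ⟨A, hAC, (hτθ A hA).2 ⟨_, hb'⟩, hAS, Set.rangeFactorization u,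
    Set.rangeFactorization_surjective⟩

end Balls

end Gaifman

theorem exist_local_preservation_under_extensions_general (L : FirstOrder.Language.{u, u})
    [L.IsRelational] [Finite (Σ n, L.Relations n)] (C : Set (Struc L))
    (hher : Hereditary C)
    (hballs : ∀ r k : ℕ, PresExtHolds (BallsClass C r k))
    {k : ℕ} (r : ℕ) (τ : L.Formula (Fin k)) (hτ : IsLocal r τ)
    (hpres : ∀ A ∈ C, ∀ B ∈ C, (∃ a : Fin k → A.carrier, τ.Realize a) → SubInd A B →
      ∃ b : Fin k → B.carrier, τ.Realize b) :
    ∃ (n : ℕ) (θ : L.Formula (Fin n)), θ.IsQF ∧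
      ∀ S ∈ C, ((∃ a : Fin k → S.carrier, τ.Realize a) ↔
        ∃ b : Fin n → S.carrier, θ.Realize b) := by
  have hpres_balls : PreservedUnderExt (BallsClass C r k) (exClosure τ) := by
    intro A hA B hB hAτ hAB
    rw [realize_exClosure] at hAτ ⊢
    exact hpres A (ballsClass_subset hher r k hA) B (ballsClass_subset hher r k hB) hAτ hAB
  obtain ⟨n, θ, hθ, hτθ⟩ := hballs r k _ hpres_balls
  refine exists_isQF_iff_of_small_models hpres fun S hS ⟨a, ha⟩ =>
    exists_small_ball_model hher hτ hθ (fun T hT => ?_) hS ha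
  rw [← realize_exClosure, hτθ T hT]

/-- **Existential local preservation under extensions.** Let `C` be a hereditary class of
finite structures such that preservation under extensions holds over `Balls(C,r,k)` for all
`r, k ≥ 0`. Then every existential local sentence `∃ x⃗, τ(x⃗)` preserved under extensions over
`C` is equivalent over `C` to an existential sentence. -/
theorem exist_local_preservation_under_extensions (L : FirstOrder.Language.{u, u})
    [L.IsRelational] [Finite (Σ n, L.Relations n)] (C : Set (Struc L))
    (hfin : ∀ A ∈ C, Finite A.carrier) (hher : Hereditary C)
    (hballs : ∀ r k : ℕ, PresExtHolds (BallsClass C r k))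
    {k : ℕ} (r : ℕ) (τ : L.Formula (Fin k)) (hτ : IsLocal r τ)
    (hpres : ∀ A ∈ C, ∀ B ∈ C, (∃ a : Fin k → A.carrier, τ.Realize a) → SubInd A B →
      ∃ b : Fin k → B.carrier, τ.Realize b) :
    ∃ (n : ℕ) (θ : L.Formula (Fin n)), θ.IsQF ∧
      ∀ S ∈ C, ((∃ a : Fin k → S.carrier, τ.Realize a) ↔
        ∃ b : Fin n → S.carrier, θ.Realize b) :=
  exist_local_preservation_under_extensions_general L C hher hballs r τ hτ hpres
end
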